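/- For every integer n≥1 and every A>0 there exists R*>0, depending only on n, A, s and f (in particular independent of β and m), such that for every R≥R*, every β∈(0,1], every integer m≥n, and every u∈E^{+n}⊕E^{−m}⊕N^m with ‖u‖_{β,E}=R, one has J_β(u) ≤ −A. -/

import Mathlib

open MeasureTheory

noncomputable section

/-- The space-time domain `Q = (0,π) × (0,2π)`. -/
def Qset : Set (ℝ × ℝ) := Set.Ioo 0 Real.pi ×ˢ Set.Ioo 0 (2 * Real.pi)

/-- Basis function `sin(jx)·cos(kt)`. -/
def phiA (j k : ℕ) : ℝ × ℝ → ℝ := fun p => Real.sin (j * p.1) * Real.cos (k * p.2)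

/-- Basis function `sin(jx)·sin(kt)`. -/
def phiB (j k : ℕ) : ℝ × ℝ → ℝ := fun p => Real.sin (j * p.1) * Real.sin (k * p.2)

/-- The (normalized) Fourier coefficient of `u` against `sin(jx)cos(kt)`. -/
def coefA (j k : ℕ) (u : ℝ × ℝ → ℝ) : ℝ :=
  ((if k = 0 then 1 else 2) / Real.pi ^ 2) * ∫ p in Qset, u p * phiA j k p

/-- The (normalized) Fourier coefficient of `u` against `sin(jx)sin(kt)`. -/
def coefB (j k : ℕ) (u : ℝ × ℝ → ℝ) : ℝ :=
  (2 / Real.pi ^ 2) * ∫ p in Qset, u p * phiB j k p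

/-- `‖w⁺‖_E²`, the square of the `E`-norm of the `E⁺` (i.e. `k > j`) component of `u`. -/
def normPlusSq (u : ℝ × ℝ → ℝ) : ℝ :=
  Real.pi ^ 2 * ∑' jk : ℕ × ℕ,
    if jk.1 < jk.2 then
      |((jk.2 : ℝ) ^ 2 - (jk.1 : ℝ) ^ 2)| * ((coefA jk.1 jk.2 u) ^ 2 + (coefB jk.1 jk.2 u) ^ 2)
    else 0

/-- `‖w⁻‖_E²`, the square of the `E`-norm of the `E⁻` (i.e. `k < j`) component of `u`. -/
def normMinusSq (u : ℝ × ℝ → ℝ) : ℝ :=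
  Real.pi ^ 2 * ∑' jk : ℕ × ℕ,
    if jk.2 < jk.1 then
      |((jk.2 : ℝ) ^ 2 - (jk.1 : ℝ) ^ 2)| * ((coefA jk.1 jk.2 u) ^ 2 + (coefB jk.1 jk.2 u) ^ 2)
    else 0

/-- `‖w‖_E²`, the square of the full `E`-norm (over all `k ≠ j`). -/
def normESq (u : ℝ × ℝ → ℝ) : ℝ := normPlusSq u + normMinusSq u

/-- `‖v_t‖²_{L²(Q)}`, where `v` is the kernel (`k = j`) component of `u`. -/
def vtNormSq (u : ℝ × ℝ → ℝ) : ℝ :=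
  (Real.pi ^ 2 / 2) * ∑' j : ℕ, (j : ℝ) ^ 2 * ((coefA j j u) ^ 2 + (coefB j j u) ^ 2)

/-- `‖u‖_{β,E}² = ‖w⁺‖_E² + ‖w⁻‖_E² + β‖v_t‖²_{L²}`. -/
def normBetaSq (β : ℝ) (u : ℝ × ℝ → ℝ) : ℝ := normPlusSq u + normMinusSq u + β * vtNormSq u

/-- `‖u‖_{β,E}`. -/
def normBeta (β : ℝ) (u : ℝ × ℝ → ℝ) : ℝ := Real.sqrt (normBetaSq β u)

/-- `∫_Q |u|^r dx dt`. -/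
def intPow (r : ℝ) (u : ℝ × ℝ → ℝ) : ℝ := ∫ p in Qset, |u p| ^ r

/-- `∫_Q f·u dx dt`. -/
def intFU (f u : ℝ × ℝ → ℝ) : ℝ := ∫ p in Qset, f p * u p

/-- The functional `I_β`. -/
def Ibeta (s : ℝ) (f : ℝ × ℝ → ℝ) (β : ℝ) (u : ℝ × ℝ → ℝ) : ℝ :=
  (1 / 2) * (normPlusSq u - normMinusSq u - β * vtNormSq u)
    - (1 / (s + 1)) * intPow (s + 1) u - intFU f u

/-- `𝓘_β(u) = 2a₆(I_β(u)² + 1)`. -/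
def calI (s : ℝ) (f : ℝ × ℝ → ℝ) (a6 β : ℝ) (u : ℝ × ℝ → ℝ) : ℝ :=
  2 * a6 * ((Ibeta s f β u) ^ 2 + 1)

/-- The cutoff `ψ(u) = χ(𝓘_β(u)⁻¹·(1/(s+1))∫_Q|u|^{s+1})`. -/
def psiCut (s : ℝ) (f : ℝ × ℝ → ℝ) (a6 : ℝ) (χ : ℝ → ℝ) (β : ℝ) (u : ℝ × ℝ → ℝ) : ℝ :=
  χ ((calI s f a6 β u)⁻¹ * ((1 / (s + 1)) * intPow (s + 1) u))

/-- The truncated functional `J_β`. -/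
def Jbeta (s : ℝ) (f : ℝ × ℝ → ℝ) (a6 : ℝ) (χ : ℝ → ℝ) (β : ℝ) (u : ℝ × ℝ → ℝ) : ℝ :=
  (1 / 2) * (normPlusSq u - normMinusSq u - β * vtNormSq u)
    - (1 / (s + 1)) * intPow (s + 1) u - psiCut s f a6 χ β u * intFU f u

/-- Indices `(j, k, A/B)` of the eigenfunctions with positive eigenvalue: `1 ≤ j < k`. -/
def IdxSet : Set (ℕ × ℕ × Bool) := {i | 1 ≤ i.1 ∧ i.1 < i.2.1}

/-- The eigenfunction corresponding to an index. -/
def idxFun (i : ℕ × ℕ × Bool) : ℝ × ℝ → ℝ := if i.2.2 then phiA i.1 i.2.1 else phiB i.1 i.2.1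

/-- The eigenvalue `k² - j²` of an index. -/
def eigenval (i : ℕ × ℕ × Bool) : ℝ := (i.2.1 : ℝ) ^ 2 - (i.1 : ℝ) ^ 2

/-- `e` (0-indexed: `e_{l+1} = idxFun (e l)`) enumerates the positive-eigenvalue
eigenfunctions in nondecreasing order of `k² - j²`. -/
def IsEnum (e : ℕ → ℕ × ℕ × Bool) : Prop :=
  Function.Injective e ∧ Set.range e = IdxSet ∧
    ∀ l l' : ℕ, l ≤ l' → eigenval (e l) ≤ eigenval (e l')

/-- `E^{+n} = span{e₁, …, e_n}`. -/
def Eplus (e : ℕ → ℕ × ℕ × Bool) (n : ℕ) : Submodule ℝ (ℝ × ℝ → ℝ) :=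
  Submodule.span ℝ (idxFun '' (e '' {l | l < n}))

/-- `E^{-m} = span{sin(jx)cos(kt), sin(jx)sin(kt) : j + k ≤ m, 0 ≤ k < j}`. -/
def Eminus (m : ℕ) : Submodule ℝ (ℝ × ℝ → ℝ) :=
  Submodule.span ℝ {g | ∃ j k : ℕ, j + k ≤ m ∧ k < j ∧ (g = phiA j k ∨ g = phiB j k)}

/-- `N^m = span{sin(jx)cos(jt), sin(jx)sin(jt) : 1 ≤ j ≤ m}`. -/
def Nspace (m : ℕ) : Submodule ℝ (ℝ × ℝ → ℝ) :=
  Submodule.span ℝ {g | ∃ j : ℕ, 1 ≤ j ∧ j ≤ m ∧ (g = phiA j j ∨ g = phiB j j)}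

/-- `E^{+n} ⊕ E^{-m} ⊕ N^m`. -/
def Wnm (e : ℕ → ℕ × ℕ × Bool) (n m : ℕ) : Submodule ℝ (ℝ × ℝ → ℝ) :=
  Eplus e n ⊔ Eminus m ⊔ Nspace m

/-- `f` is `C²`, `2π`-periodic in `t`, and vanishes at `x = 0` and `x = π`. -/
def fAdmissible (f : ℝ × ℝ → ℝ) : Prop :=
  ContDiff ℝ 2 f ∧ (∀ x t : ℝ, f (x, t + 2 * Real.pi) = f (x, t)) ∧
    ∀ t : ℝ, f (0, t) = 0 ∧ f (Real.pi, t) = 0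

/-- The cutoff function `χ`: smooth, `χ = 1` on `(-∞,1]`, `χ = 0` on `[2,∞)`,
and `-2 < χ' < 0` on `(1,2)`. -/
def chiAdmissible (χ : ℝ → ℝ) : Prop :=
  ContDiff ℝ (⊤ : ℕ∞) χ ∧ (∀ t : ℝ, t ≤ 1 → χ t = 1) ∧ (∀ t : ℝ, 2 ≤ t → χ t = 0) ∧
    ∀ t : ℝ, 1 < t → t < 2 → -2 < deriv χ t ∧ deriv χ t < 0

/-!
Write `‖u‖²_{β,E} = ‖w⁺‖²_E + ‖w⁻‖²_E + β‖v_t‖²`. Then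
`J_β(u) = ‖w⁺‖²_E − ½‖u‖²_{β,E} − (1/(s+1))∫_Q|u|^{s+1} − ψ(u)∫_Q fu` with `0 ≤ ψ ≤ 1`.
For `u ∈ E^{+n} ⊕ E^{−m} ⊕ N^m` only the modes of `e₁, …, e_n` contribute to `w⁺`; each
coefficient is at most `(2/π²)∫_Q|u|` and each eigenvalue at most that of `e_n`, so
`‖w⁺‖²_E ≤ D (∫_Q|u|)²` with `D` independent of `m` and `β`; similarly `|∫_Q fu| ≤ M ∫_Q|u|`.
By Jensen `(∫_Q|u|)^{s+1} ≤ |Q|^s ∫_Q|u|^{s+1}`, and since `1, 2 < s + 1` both terms are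
absorbed by half of the `|u|^{s+1}` term up to an additive constant. Hence
`J_β(u) ≤ C − ½‖u‖²_{β,E}` uniformly in `β` and `m`, which gives the claim on large spheres.
-/

open Real Set

theorem exists_mul_pow_le_add_mul_rpow {k : ℕ} {q : ℝ} (hkq : (k : ℝ) < q) (c : ℝ) {ε : ℝ}
    (hε : 0 < ε) : ∃ C, ∀ x : ℝ, 0 ≤ x → c * x ^ k ≤ C + ε * x ^ q := by
  set x₀ := (|c| / ε) ^ (q - k)⁻¹
  have hx₀ : 0 ≤ x₀ := by positivity
  refine ⟨|c| * x₀ ^ k, fun x hx => ?_⟩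
  have hcx : c * x ^ k ≤ |c| * x ^ k := by gcongr; exact le_abs_self c
  rcases le_or_gt x x₀ with hle | hlt
  · have : |c| * x ^ k ≤ |c| * x₀ ^ k := by gcongr
    nlinarith [show 0 ≤ ε * x ^ q by positivity]
  · have hxpos : 0 < x := hx₀.trans_lt hlt
    have hsplit : x ^ q = x ^ (q - k) * x ^ k := by
      rw [← Real.rpow_natCast, ← Real.rpow_add hxpos, sub_add_cancel]
    have hbig : |c| / ε ≤ x ^ (q - k) := by
      calc |c| / ε = x₀ ^ (q - k) := by
            rw [← Real.rpow_mul (by positivity), inv_mul_cancel₀ (by linarith), Real.rpow_one]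
        _ ≤ x ^ (q - k) := by gcongr
    have : |c| * x ^ k ≤ ε * x ^ q := by
      rw [hsplit, ← mul_assoc]
      gcongr
      rwa [div_le_iff₀' hε] at hbig
    nlinarith [show 0 ≤ |c| * x₀ ^ k by positivity]

theorem setIntegral_rpow_le {α : Type*} [MeasurableSpace α] {μ : Measure α} {t : Set α}
    (h0 : μ t ≠ 0) (ht : μ t ≠ ⊤) {q : ℝ} (hq : 1 ≤ q) {g : α → ℝ}
    (hg : ∀ᵐ x ∂μ.restrict t, 0 ≤ g x) (hgi : IntegrableOn g t μ)
    (hgqi : IntegrableOn (fun x => g x ^ q) t μ) :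
    (∫ x in t, g x ∂μ) ^ q ≤ μ.real t ^ (q - 1) * ∫ x in t, g x ^ q ∂μ := by
  have hV : 0 < μ.real t := ENNReal.toReal_pos h0 ht
  have hjensen := (convexOn_rpow hq).map_set_average_le
    (Real.continuous_rpow_const (by linarith)).continuousOn isClosed_Ici h0 ht hg hgi hgqi
  simp only [setAverage_eq, smul_eq_mul] at hjensen
  have hL : 0 ≤ ∫ x in t, g x ∂μ := setIntegral_nonneg_of_ae_restrict hg
  rwa [Real.mul_rpow (by positivity) hL, Real.inv_rpow hV.le, inv_mul_le_iff₀ (by positivity),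
    ← mul_assoc, ← div_eq_mul_inv, ← Real.rpow_sub_one hV.ne'] at hjensen

theorem abs_integral_mul_le {α : Type*} [MeasurableSpace α] {μ : Measure α} {g u : α → ℝ}
    {M : ℝ} (hg : ∀ᵐ x ∂μ, |g x| ≤ M) (hu : Integrable u μ) :
    |∫ x, g x * u x ∂μ| ≤ M * ∫ x, |u x| ∂μ := by
  rw [← integral_const_mul, ← Real.norm_eq_abs]
  refine norm_integral_le_of_norm_le (hu.abs.const_mul M) ?_
  filter_upwards [hg] with x hx
  rw [Real.norm_eq_abs, abs_mul]
  exact mul_le_mul_of_nonneg_right hx (abs_nonneg _)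

theorem integral_cos_int_mul_eq_zero {m : ℤ} (hm : m ≠ 0) (N : ℕ) :
    ∫ x in (0 : ℝ)..N * π, cos (m * x) = 0 := by
  rw [intervalIntegral.integral_comp_mul_left (fun x => cos x) (Int.cast_ne_zero.mpr hm),
    integral_cos, mul_zero, sin_zero, ← mul_assoc,
    show (m : ℝ) * N = ((m * N : ℤ) : ℝ) by push_cast; ring,
    sin_int_mul_pi, sub_zero, smul_zero]

theorem integral_sin_int_mul_eq_zero (m : ℤ) : ∫ x in (0 : ℝ)..2 * π, sin (m * x) = 0 := by
  rcases eq_or_ne m 0 with rfl | hm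
  · simp
  rw [intervalIntegral.integral_comp_mul_left (fun x => sin x) (Int.cast_ne_zero.mpr hm),
    integral_sin, mul_zero, cos_zero, cos_int_mul_two_pi, sub_self, smul_zero]

theorem integral_sin_mul_sin_eq_zero {j j' : ℕ} (h : j ≠ j') (N : ℕ) :
    ∫ x in (0 : ℝ)..N * π, sin (j * x) * sin (j' * x) = 0 := by
  have hsub : ((j : ℤ) - j') ≠ 0 := sub_ne_zero.mpr (by exact_mod_cast h)
  have hadd : ((j : ℤ) + j') ≠ 0 := by omega
  have hprod : ∀ x : ℝ, sin (j * x) * sin (j' * x)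
      = (cos (((j - j' : ℤ) : ℝ) * x) - cos (((j + j' : ℤ) : ℝ) * x)) / 2 := by
    intro x; push_cast; rw [sub_mul, add_mul, cos_sub, cos_add]; ring
  simp_rw [hprod]
  rw [intervalIntegral.integral_div, intervalIntegral.integral_sub
    (Continuous.intervalIntegrable (by fun_prop) _ _)
    (Continuous.intervalIntegrable (by fun_prop) _ _),
    integral_cos_int_mul_eq_zero hsub, integral_cos_int_mul_eq_zero hadd, sub_zero, zero_div]

theorem integral_cos_mul_cos_eq_zero {k k' : ℕ} (h : k ≠ k') (N : ℕ) :
    ∫ x in (0 : ℝ)..N * π, cos (k * x) * cos (k' * x) = 0 := by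
  have hsub : ((k : ℤ) - k') ≠ 0 := sub_ne_zero.mpr (by exact_mod_cast h)
  have hadd : ((k : ℤ) + k') ≠ 0 := by omega
  have hprod : ∀ x : ℝ, cos (k * x) * cos (k' * x)
      = (cos (((k - k' : ℤ) : ℝ) * x) + cos (((k + k' : ℤ) : ℝ) * x)) / 2 := by
    intro x; push_cast; rw [sub_mul, add_mul, cos_sub, cos_add]; ring
  simp_rw [hprod]
  rw [intervalIntegral.integral_div, intervalIntegral.integral_add
    (Continuous.intervalIntegrable (by fun_prop) _ _)
    (Continuous.intervalIntegrable (by fun_prop) _ _),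
    integral_cos_int_mul_eq_zero hsub, integral_cos_int_mul_eq_zero hadd, add_zero, zero_div]

theorem integral_sin_mul_cos_eq_zero (k k' : ℕ) :
    ∫ x in (0 : ℝ)..2 * π, sin (k * x) * cos (k' * x) = 0 := by
  have hprod : ∀ x : ℝ, sin (k * x) * cos (k' * x)
      = (sin (((k + k' : ℤ) : ℝ) * x) + sin (((k - k' : ℤ) : ℝ) * x)) / 2 := by
    intro x; push_cast; rw [sub_mul, add_mul, sin_sub, sin_add]; ring
  simp_rw [hprod]
  rw [intervalIntegral.integral_div, intervalIntegral.integral_add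
    (Continuous.intervalIntegrable (by fun_prop) _ _)
    (Continuous.intervalIntegrable (by fun_prop) _ _),
    integral_sin_int_mul_eq_zero, integral_sin_int_mul_eq_zero, add_zero, zero_div]

theorem setIntegral_Qset_of_eq_mul {g : ℝ × ℝ → ℝ} (F G : ℝ → ℝ)
    (h : ∀ p, g p = F p.1 * G p.2) :
    ∫ p in Qset, g p = (∫ x in (0 : ℝ)..π, F x) * ∫ t in (0 : ℝ)..2 * π, G t := by
  rw [intervalIntegral.integral_of_le pi_pos.le, intervalIntegral.integral_of_le (by positivity),
    integral_Ioc_eq_integral_Ioo, integral_Ioc_eq_integral_Ioo, ← setIntegral_prod_mul,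
    ← Measure.volume_eq_prod]
  simp_rw [h, Qset]

theorem Qset_subset_Icc_prod_Icc : Qset ⊆ Icc 0 π ×ˢ Icc 0 (2 * π) :=
  prod_mono Ioo_subset_Icc_self Ioo_subset_Icc_self

theorem measurableSet_Qset : MeasurableSet Qset :=
  measurableSet_Ioo.prod measurableSet_Ioo

theorem volume_Qset : volume Qset = ENNReal.ofReal (2 * π ^ 2) := by
  rw [Qset, Measure.volume_eq_prod, Measure.prod_prod, Real.volume_Ioo, Real.volume_Ioo,
    ← ENNReal.ofReal_mul (by simp [pi_pos.le])]
  ring_nf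

theorem Continuous.integrableOn_Qset {g : ℝ × ℝ → ℝ} (hg : Continuous g) :
    IntegrableOn g Qset :=
  (hg.continuousOn.integrableOn_compact (isCompact_Icc.prod isCompact_Icc)).mono_set
    Qset_subset_Icc_prod_Icc

theorem continuous_phiA (j k : ℕ) : Continuous (phiA j k) := by
  unfold phiA; fun_prop

theorem continuous_phiB (j k : ℕ) : Continuous (phiB j k) := by
  unfold phiB; fun_prop

theorem abs_phiA_le_one (j k : ℕ) (p : ℝ × ℝ) : |phiA j k p| ≤ 1 := by
  rw [phiA, abs_mul]
  exact mul_le_one₀ (abs_sin_le_one _) (abs_nonneg _) (abs_cos_le_one _)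

theorem abs_phiB_le_one (j k : ℕ) (p : ℝ × ℝ) : |phiB j k p| ≤ 1 := by
  rw [phiB, abs_mul]
  exact mul_le_one₀ (abs_sin_le_one _) (abs_nonneg _) (abs_sin_le_one _)

theorem coefA_phiA {j k j' k' : ℕ} (h : (j', k') ≠ (j, k)) : coefA j k (phiA j' k') = 0 := by
  rw [coefA, setIntegral_Qset_of_eq_mul (fun x => sin (j' * x) * sin (j * x))
    (fun t => cos (k' * t) * cos (k * t)) (fun p => by simp only [phiA]; ring)]
  rcases eq_or_ne j' j with rfl | hj
  · have hk : k' ≠ k := fun hk => h (by rw [hk])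
    exact mul_eq_zero_of_right _
      (mul_eq_zero_of_right _ (by simpa using integral_cos_mul_cos_eq_zero hk 2))
  · exact mul_eq_zero_of_right _
      (mul_eq_zero_of_left (by simpa using integral_sin_mul_sin_eq_zero hj 1) _)

theorem coefB_phiB {j k j' k' : ℕ} (h : (j', k') ≠ (j, k)) : coefB j k (phiB j' k') = 0 := by
  rw [coefB, setIntegral_Qset_of_eq_mul (fun x => sin (j' * x) * sin (j * x))
    (fun t => sin (k' * t) * sin (k * t)) (fun p => by simp only [phiB]; ring)]
  rcases eq_or_ne j' j with rfl | hj
  · have hk : k' ≠ k := fun hk => h (by rw [hk])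
    exact mul_eq_zero_of_right _
      (mul_eq_zero_of_right _ (by simpa using integral_sin_mul_sin_eq_zero hk 2))
  · exact mul_eq_zero_of_right _
      (mul_eq_zero_of_left (by simpa using integral_sin_mul_sin_eq_zero hj 1) _)

theorem coefB_phiA (j k j' k' : ℕ) : coefB j k (phiA j' k') = 0 := by
  rw [coefB, setIntegral_Qset_of_eq_mul (fun x => sin (j' * x) * sin (j * x))
    (fun t => sin (k * t) * cos (k' * t)) (fun p => by simp only [phiA, phiB]; ring),
    integral_sin_mul_cos_eq_zero, mul_zero, mul_zero]

theorem coefA_phiB (j k j' k' : ℕ) : coefA j k (phiB j' k') = 0 := by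
  rw [coefA, setIntegral_Qset_of_eq_mul (fun x => sin (j' * x) * sin (j * x))
    (fun t => sin (k' * t) * cos (k * t)) (fun p => by simp only [phiA, phiB]; ring),
    integral_sin_mul_cos_eq_zero, mul_zero, mul_zero]

theorem coefA_add {u v : ℝ × ℝ → ℝ} (hu : Continuous u) (hv : Continuous v) (j k : ℕ) :
    coefA j k (u + v) = coefA j k u + coefA j k v := by
  simp only [coefA, Pi.add_apply, add_mul]
  rw [integral_add (f := fun p => u p * phiA j k p) (g := fun p => v p * phiA j k p)
    (hu.mul (continuous_phiA j k)).integrableOn_Qset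
    (hv.mul (continuous_phiA j k)).integrableOn_Qset, mul_add]

theorem coefB_add {u v : ℝ × ℝ → ℝ} (hu : Continuous u) (hv : Continuous v) (j k : ℕ) :
    coefB j k (u + v) = coefB j k u + coefB j k v := by
  simp only [coefB, Pi.add_apply, add_mul]
  rw [integral_add (f := fun p => u p * phiB j k p) (g := fun p => v p * phiB j k p)
    (hu.mul (continuous_phiB j k)).integrableOn_Qset
    (hv.mul (continuous_phiB j k)).integrableOn_Qset, mul_add]

theorem coefA_smul (c : ℝ) (u : ℝ × ℝ → ℝ) (j k : ℕ) : coefA j k (c • u) = c * coefA j k u := by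
  simp only [coefA, Pi.smul_apply, smul_eq_mul, mul_assoc, integral_const_mul]
  ring

theorem coefB_smul (c : ℝ) (u : ℝ × ℝ → ℝ) (j k : ℕ) : coefB j k (c • u) = c * coefB j k u := by
  simp only [coefB, Pi.smul_apply, smul_eq_mul, mul_assoc, integral_const_mul]
  ring

-- Continuity makes the coefficients additive: every integrand is then integrable on `Q`.
def coefVanishing (T : Set (ℕ × ℕ)) : Submodule ℝ (ℝ × ℝ → ℝ) where
  carrier := {u | Continuous u ∧ ∀ jk ∈ T, coefA jk.1 jk.2 u = 0 ∧ coefB jk.1 jk.2 u = 0}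
  zero_mem' := ⟨continuous_const, fun jk _ => by simp [coefA, coefB]⟩
  add_mem' := by
    rintro u v ⟨hu, hu0⟩ ⟨hv, hv0⟩
    refine ⟨hu.add hv, fun jk hjk => ?_⟩
    rw [coefA_add hu hv, coefB_add hu hv, (hu0 jk hjk).1, (hu0 jk hjk).2, (hv0 jk hjk).1,
      (hv0 jk hjk).2]
    simp
  smul_mem' := by
    rintro c u ⟨hu, hu0⟩
    refine ⟨continuous_const.mul hu, fun jk hjk => ?_⟩
    rw [coefA_smul, coefB_smul, (hu0 jk hjk).1, (hu0 jk hjk).2]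
    simp

theorem phiA_mem_coefVanishing {T : Set (ℕ × ℕ)} {j k : ℕ} (h : (j, k) ∉ T) :
    phiA j k ∈ coefVanishing T :=
  ⟨continuous_phiA j k, fun _ hjk =>
    ⟨coefA_phiA (fun heq => h (heq ▸ hjk)), coefB_phiA _ _ _ _⟩⟩

theorem phiB_mem_coefVanishing {T : Set (ℕ × ℕ)} {j k : ℕ} (h : (j, k) ∉ T) :
    phiB j k ∈ coefVanishing T :=
  ⟨continuous_phiB j k, fun _ hjk =>
    ⟨coefA_phiB _ _ _ _, coefB_phiB (fun heq => h (heq ▸ hjk))⟩⟩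

def enumPairs (e : ℕ → ℕ × ℕ × Bool) (n : ℕ) : Finset (ℕ × ℕ) :=
  (Finset.range n).image fun l => ((e l).1, (e l).2.1)

theorem Wnm_le_coefVanishing (e : ℕ → ℕ × ℕ × Bool) (n m : ℕ) :
    Wnm e n m ≤ coefVanishing {jk | jk.1 < jk.2 ∧ jk ∉ enumPairs e n} := by
  refine sup_le (sup_le (Submodule.span_le.mpr ?_) (Submodule.span_le.mpr ?_))
    (Submodule.span_le.mpr ?_)
  · rintro _ ⟨_, ⟨l, hl, rfl⟩, rfl⟩
    have hT : ((e l).1, (e l).2.1) ∉ {jk : ℕ × ℕ | jk.1 < jk.2 ∧ jk ∉ enumPairs e n} :=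
      fun h => h.2 (Finset.mem_image_of_mem _ (Finset.mem_range.mpr hl))
    unfold idxFun
    split
    · exact phiA_mem_coefVanishing hT
    · exact phiB_mem_coefVanishing hT
  · rintro _ ⟨j, k, -, hkj, rfl | rfl⟩
    · exact phiA_mem_coefVanishing fun h => lt_asymm hkj h.1
    · exact phiB_mem_coefVanishing fun h => lt_asymm hkj h.1
  · rintro _ ⟨j, -, -, rfl | rfl⟩
    · exact phiA_mem_coefVanishing fun h => lt_irrefl j h.1
    · exact phiB_mem_coefVanishing fun h => lt_irrefl j h.1

theorem abs_coefA_le {u : ℝ × ℝ → ℝ} (hu : Continuous u) (j k : ℕ) :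
    |coefA j k u| ≤ 2 / π ^ 2 * ∫ p in Qset, |u p| := by
  have hI : |∫ p in Qset, u p * phiA j k p| ≤ 1 * ∫ p in Qset, |u p| := by
    simp_rw [mul_comm (u _)]
    exact abs_integral_mul_le (ae_of_all _ (abs_phiA_le_one j k)) hu.integrableOn_Qset
  rw [one_mul] at hI
  rw [coefA, abs_mul]
  gcongr
  rw [abs_of_nonneg (by positivity)]
  gcongr
  split <;> norm_num

theorem abs_coefB_le {u : ℝ × ℝ → ℝ} (hu : Continuous u) (j k : ℕ) :
    |coefB j k u| ≤ 2 / π ^ 2 * ∫ p in Qset, |u p| := by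
  have hI : |∫ p in Qset, u p * phiB j k p| ≤ 1 * ∫ p in Qset, |u p| := by
    simp_rw [mul_comm (u _)]
    exact abs_integral_mul_le (ae_of_all _ (abs_phiB_le_one j k)) hu.integrableOn_Qset
  rw [one_mul] at hI
  rw [coefB, abs_mul, abs_of_nonneg (by positivity : (0 : ℝ) ≤ 2 / π ^ 2)]
  gcongr

theorem normPlusSq_le {u : ℝ × ℝ → ℝ} {F : Finset (ℕ × ℕ)}
    (hu : u ∈ coefVanishing {jk | jk.1 < jk.2 ∧ jk ∉ F}) {Λ B : ℝ} (hΛ : 0 ≤ Λ)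
    (hF : ∀ jk ∈ F, (jk.2 : ℝ) ^ 2 - (jk.1 : ℝ) ^ 2 ≤ Λ)
    (hA : ∀ j k, |coefA j k u| ≤ B) (hB : ∀ j k, |coefB j k u| ≤ B) :
    normPlusSq u ≤ π ^ 2 * (F.card * (Λ * (2 * B ^ 2))) := by
  rw [normPlusSq, tsum_eq_sum (s := F) fun jk hjk => ?_]
  · gcongr
    rw [← nsmul_eq_mul]
    refine Finset.sum_le_card_nsmul _ _ _ fun jk hjk => ?_
    split_ifs with hlt
    · have hpos : (0 : ℝ) ≤ (jk.2 : ℝ) ^ 2 - (jk.1 : ℝ) ^ 2 := by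
        have : (jk.1 : ℝ) < jk.2 := by exact_mod_cast hlt
        nlinarith
      have hsq : ∀ {c : ℝ}, |c| ≤ B → c ^ 2 ≤ B ^ 2 := fun hc =>
        sq_le_sq' (abs_le.mp hc).1 (abs_le.mp hc).2
      rw [abs_of_nonneg hpos, two_mul]
      exact mul_le_mul (hF jk hjk) (add_le_add (hsq (hA _ _)) (hsq (hB _ _))) (by positivity) hΛ
    · positivity
  · split_ifs with hlt
    · obtain ⟨hA0, hB0⟩ := hu.2 jk ⟨hlt, hjk⟩
      simp [hA0, hB0]
    · rfl

theorem exists_normPlusSq_le_of_mem_Wnm {e : ℕ → ℕ × ℕ × Bool} (he : IsEnum e) (n : ℕ) :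
    ∃ D, ∀ m, ∀ u ∈ Wnm e n m, normPlusSq u ≤ D * (∫ p in Qset, |u p|) ^ 2 := by
  set Λ := eigenval (e (n - 1))
  have hΛ : 0 ≤ Λ := by
    have hmem : e (n - 1) ∈ IdxSet := he.2.1 ▸ mem_range_self _
    have : ((e (n - 1)).1 : ℝ) < (e (n - 1)).2.1 := by exact_mod_cast hmem.2
    simp only [Λ, eigenval]
    nlinarith
  have hF : ∀ jk ∈ enumPairs e n, (jk.2 : ℝ) ^ 2 - (jk.1 : ℝ) ^ 2 ≤ Λ := by
    simp only [enumPairs, Finset.mem_image, Finset.mem_range]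
    rintro _ ⟨l, hl, rfl⟩
    exact he.2.2 l (n - 1) (by omega)
  refine ⟨π ^ 2 * (n * (Λ * (2 * (2 / π ^ 2) ^ 2))), fun m u hu => ?_⟩
  have hu' := Wnm_le_coefVanishing e n m hu
  have hcard : ((enumPairs e n).card : ℝ) ≤ n := by
    exact_mod_cast Finset.card_image_le.trans (Finset.card_range n).le
  calc normPlusSq u
      ≤ π ^ 2 * ((enumPairs e n).card * (Λ * (2 * (2 / π ^ 2 * ∫ p in Qset, |u p|) ^ 2))) :=
        normPlusSq_le hu' hΛ hF (abs_coefA_le hu'.1) (abs_coefB_le hu'.1)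
    _ ≤ π ^ 2 * (n * (Λ * (2 * (2 / π ^ 2 * ∫ p in Qset, |u p|) ^ 2))) := by gcongr
    _ = _ := by ring

theorem chiAdmissible.mem_Icc {χ : ℝ → ℝ} (hχ : chiAdmissible χ) (t : ℝ) : χ t ∈ Icc 0 1 := by
  obtain ⟨hsmooth, hone, hzero, hderiv⟩ := hχ
  have hanti : AntitoneOn χ (Icc 1 2) := by
    refine antitoneOn_of_deriv_nonpos (convex_Icc 1 2) hsmooth.continuous.continuousOn
      (hsmooth.differentiable (by simp)).differentiableOn fun x hx => ?_
    rw [interior_Icc] at hx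
    exact (hderiv x hx.1 hx.2).2.le
  rcases le_or_gt t 1 with ht1 | ht1
  · simp [hone t ht1]
  rcases le_or_gt 2 t with ht2 | ht2
  · simp [hzero t ht2]
  have hmem : t ∈ Icc (1 : ℝ) 2 := ⟨ht1.le, ht2.le⟩
  constructor
  · simpa [hzero 2 le_rfl] using hanti hmem ⟨one_le_two, le_rfl⟩ ht2.le
  · simpa [hone 1 le_rfl] using hanti ⟨le_rfl, one_le_two⟩ hmem ht1.le

theorem exists_abs_intFU_le {f : ℝ × ℝ → ℝ} (hf : Continuous f) :
    ∃ M, ∀ u : ℝ × ℝ → ℝ, Continuous u → |intFU f u| ≤ M * ∫ p in Qset, |u p| := by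
  obtain ⟨M, hM⟩ :=
    (isCompact_Icc.prod isCompact_Icc).exists_bound_of_continuousOn hf.continuousOn
  refine ⟨M, fun u hu => abs_integral_mul_le ?_ hu.integrableOn_Qset⟩
  exact ae_restrict_of_forall_mem measurableSet_Qset fun p hp => hM p (Qset_subset_Icc_prod_Icc hp)

theorem rpow_integral_abs_le_intPow {q : ℝ} (hq : 1 ≤ q) {u : ℝ × ℝ → ℝ} (hu : Continuous u) :
    (∫ p in Qset, |u p|) ^ q ≤ volume.real Qset ^ (q - 1) * intPow q u :=
  setIntegral_rpow_le (volume_Qset ▸ (ENNReal.ofReal_pos.mpr (by positivity)).ne')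
    (volume_Qset ▸ ENNReal.ofReal_ne_top) hq
    (ae_of_all _ fun p => abs_nonneg (u p)) hu.abs.integrableOn_Qset
    (hu.abs.rpow_const fun _ => Or.inr (by linarith)).integrableOn_Qset

theorem exists_mul_pow_integral_abs_le {k : ℕ} {q : ℝ} (hq : 1 ≤ q) (hkq : (k : ℝ) < q) (c : ℝ)
    {ε : ℝ} (hε : 0 < ε) :
    ∃ C, ∀ u : ℝ × ℝ → ℝ, Continuous u → c * (∫ p in Qset, |u p|) ^ k ≤ C + ε * intPow q u := by
  set K := volume.real Qset ^ (q - 1)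
  have hK : 0 < K := by
    have : 0 < volume.real Qset := by
      rw [measureReal_def, volume_Qset, ENNReal.toReal_ofReal (by positivity)]
      positivity
    positivity
  obtain ⟨C, hC⟩ := exists_mul_pow_le_add_mul_rpow hkq c (div_pos hε hK)
  refine ⟨C, fun u hu => ?_⟩
  have hL : 0 ≤ ∫ p in Qset, |u p| := setIntegral_nonneg measurableSet_Qset fun p _ => abs_nonneg _
  calc c * (∫ p in Qset, |u p|) ^ k ≤ C + ε / K * (∫ p in Qset, |u p|) ^ q := hC _ hL
    _ ≤ C + ε / K * (K * intPow q u) := by gcongr; exact rpow_integral_abs_le_intPow hq hu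
    _ = C + ε * intPow q u := by field_simp

theorem exists_Jbeta_le_sub_half_normBetaSq {s : ℝ} (hs : 1 < s) {f : ℝ × ℝ → ℝ}
    (hf : Continuous f) {e : ℕ → ℕ × ℕ × Bool} (he : IsEnum e) (a6 : ℝ) {χ : ℝ → ℝ}
    (hχ : ∀ t, χ t ∈ Icc 0 1) (n : ℕ) :
    ∃ C, ∀ β m, ∀ u ∈ Wnm e n m, Jbeta s f a6 χ β u ≤ C - normBetaSq β u / 2 := by
  have hκ : 0 < 1 / (s + 1) / 2 := by positivity
  obtain ⟨D, hD⟩ := exists_normPlusSq_le_of_mem_Wnm he n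
  obtain ⟨M, hM⟩ := exists_abs_intFU_le hf
  obtain ⟨C₁, hC₁⟩ :=
    exists_mul_pow_integral_abs_le (k := 2) (q := s + 1) (by linarith) (by push_cast; linarith) D hκ
  obtain ⟨C₂, hC₂⟩ :=
    exists_mul_pow_integral_abs_le (k := 1) (q := s + 1) (by linarith) (by push_cast; linarith) M hκ
  refine ⟨C₁ + C₂, fun β m u hu => ?_⟩
  have hu' : Continuous u := (Wnm_le_coefVanishing e n m hu).1
  have hψ := hχ ((calI s f a6 β u)⁻¹ * ((1 / (s + 1)) * intPow (s + 1) u))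
  have hcut : -(psiCut s f a6 χ β u * intFU f u) ≤ |intFU f u| := by
    refine (neg_le_abs _).trans ?_
    rw [abs_mul, psiCut, abs_of_nonneg hψ.1]
    exact mul_le_of_le_one_left (abs_nonneg _) hψ.2
  have h₁ := hC₁ u hu'
  have h₂ := hC₂ u hu'
  rw [pow_one] at h₂
  unfold Jbeta normBetaSq
  linarith [hD m u hu, hM u hu']

theorem statement10_general (s : ℝ) (hs : 1 < s) (f : ℝ × ℝ → ℝ) (hf : fAdmissible f)
    (e : ℕ → ℕ × ℕ × Bool) (he : IsEnum e) (a6 : ℝ)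
    (χ : ℝ → ℝ) (hχ : chiAdmissible χ) :
    ∀ n : ℕ, 1 ≤ n → ∀ A : ℝ, 0 < A → ∃ Rstar : ℝ, 0 < Rstar ∧
      ∀ R : ℝ, Rstar ≤ R → ∀ β ∈ Set.Ioc (0 : ℝ) 1, ∀ m : ℕ, n ≤ m →
        ∀ u ∈ Wnm e n m, normBeta β u = R → Jbeta s f a6 χ β u ≤ -A := by
  intro n _ A _
  obtain ⟨C, hC⟩ :=
    exists_Jbeta_le_sub_half_normBetaSq hs hf.1.continuous he a6 hχ.mem_Icc n
  refine ⟨max 1 (2 * (A + C)), by positivity, fun R hR β _ m _ u hu hnorm => ?_⟩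
  have hR₁ : 1 ≤ R := le_of_max_le_left hR
  have hpos : 0 < sqrt (normBetaSq β u) := by rw [← normBeta, hnorm]; linarith
  have hnormSq : normBetaSq β u = R ^ 2 := by
    rw [← hnorm, normBeta, sq_sqrt (sqrt_pos.mp hpos).le]
  nlinarith [hC β m u hu, le_of_max_le_right hR]

/-- `J_β → -∞` uniformly on spheres of large radius in
`E^{+n} ⊕ E^{-m} ⊕ N^m`, uniformly in `β ∈ (0,1]` and `m`. -/
theorem statement10 (s : ℝ) (hs : 1 < s) (f : ℝ × ℝ → ℝ) (hf : fAdmissible f)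
    (e : ℕ → ℕ × ℕ × Bool) (he : IsEnum e) (a6 : ℝ) (ha6 : 0 < a6)
    (χ : ℝ → ℝ) (hχ : chiAdmissible χ) :
    ∀ n : ℕ, 1 ≤ n → ∀ A : ℝ, 0 < A → ∃ Rstar : ℝ, 0 < Rstar ∧
      ∀ R : ℝ, Rstar ≤ R → ∀ β ∈ Set.Ioc (0 : ℝ) 1, ∀ m : ℕ, n ≤ m →
        ∀ u ∈ Wnm e n m, normBeta β u = R → Jbeta s f a6 χ β u ≤ -A :=
  statement10_general s hs f hf e he a6 χ hχ
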